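/- Let Y₅ = (1/r)(x,σ₁×σ₂), Y₆ = (1/r)(x,σ₁), Y₇ = (1/r)(x,σ₂−σ₁). Then the following commutation relations hold: [K, Y₆] = 2i Y₅, [K, Y₅] = 4i Y₇, [K, Y₇] = −4i Y₅, and [Y₆, Y₇] = 0. -/

import Mathlib

noncomputable section

open scoped BigOperators

/-- The spinor space `ℂ⁴ = ℂ² ⊗ ℂ²`, realized as functions on `Fin 2 × Fin 2`. -/
abbrev Spinor : Type := Fin 2 × Fin 2 → ℂ

/-- Wave functions on `ℝ³` (in the statements they are restricted to functions
that are smooth away from the origin). -/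
abbrev WaveFn : Type := (Fin 3 → ℝ) → Spinor

/-- Operators: `ℂ`-linear combinations and compositions are formed pointwise. -/
abbrev Op : Type := WaveFn → WaveFn

/-- The commutator `[A,B] = AB − BA`. -/
def opComm (A B : Op) : Op := fun ψ => A (B ψ) - B (A ψ)

/-- The identity operator. -/
def idOp : Op := fun ψ => ψ

/-- The Euclidean norm `r = |x|`. -/
def rfun (x : Fin 3 → ℝ) : ℝ := Real.sqrt (∑ k, x k ^ 2)

/-- Multiplication by a radial function `f(r)`. -/
def mulR (f : ℝ → ℝ) : Op := fun ψ x => (f (rfun x) : ℂ) • ψ x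

/-- The position operator `x_k` (multiplication by the k-th coordinate). -/
def xOp (k : Fin 3) : Op := fun ψ x => (x k : ℂ) • ψ x

/-- The momentum operator `p_k = -ihbar ∂/∂x_k`. -/
def pOp (hbar : ℝ) (k : Fin 3) : Op :=
  fun ψ x => (-(Complex.I * (hbar : ℂ))) • fderiv ℝ ψ x (Pi.single k 1)

/-- The Laplacian `Δ = Σ_k ∂²/∂x_k²`. -/
def lap : Op :=
  fun ψ x => ∑ k, fderiv ℝ (fun y => fderiv ℝ ψ y (Pi.single k 1)) x (Pi.single k 1)

/-- The totally antisymmetric Levi-Civita symbol `ε_{ijk}` on `Fin 3`. -/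
def eps (i j k : Fin 3) : ℂ :=
  ((j.1 : ℂ) - (i.1 : ℂ)) * ((k.1 : ℂ) - (i.1 : ℂ)) * ((k.1 : ℂ) - (j.1 : ℂ)) / 2

/-- The standard Pauli matrices `σ¹, σ², σ³`. -/
def pauli : Fin 3 → Matrix (Fin 2) (Fin 2) ℂ :=
  ![!![0, 1; 1, 0], !![0, -Complex.I; Complex.I, 0], !![1, 0; 0, -1]]

/-- `(σ₁)_k = σ^k ⊗ I₂`, acting on the first tensor factor. -/
def sigma1 (k : Fin 3) : Op := fun ψ x ab => ∑ j, pauli k ab.1 j * ψ x (j, ab.2)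

/-- `(σ₂)_k = I₂ ⊗ σ^k`, acting on the second tensor factor. -/
def sigma2 (k : Fin 3) : Op := fun ψ x ab => ∑ j, pauli k ab.2 j * ψ x (ab.1, j)

/-- Dot product of triples of operators: `(A,B) = Σ_k A_k B_k`. -/
def dot (A B : Fin 3 → Op) : Op := ∑ k, A k ∘ B k

/-- Cross product of triples of operators: `(A×B)_k = ε_{klm} A_l B_m`. -/
def cross (A B : Fin 3 → Op) (k : Fin 3) : Op := ∑ l, ∑ m, eps k l m • (A l ∘ B m)

/-- The angular momentum `L_k = ε_{klm} x_l p_m`. -/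
def LOp (hbar : ℝ) (k : Fin 3) : Op := ∑ l, ∑ m, eps k l m • (xOp l ∘ pOp hbar m)

/-- The spin-exchange operator `K = (σ₁,σ₂)`. -/
def KOp : Op := dot sigma1 sigma2

/-- `σ₁ + σ₂` componentwise. -/
def sigmaSum (k : Fin 3) : Op := sigma1 k + sigma2 k

/-- `σ₁ − σ₂` componentwise. -/
def sigmaDiff (k : Fin 3) : Op := sigma1 k - sigma2 k

/-- The general rotationally invariant two-spin Hamiltonian
`H = −(hbar²/2)Δ + V₀(r) + ½V₁(r)(σ₁+σ₂,L) + V₂(r)K + V₃(r)(x,σ₁)(x,σ₂)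
    + V₄(r)(σ₁,p)(σ₂,p) + ½V₅(r)[(σ₁,L)(σ₂,L)+(σ₂,L)(σ₁,L)]`. -/
def Ham (hbar : ℝ) (V₀ V₁ V₂ V₃ V₄ V₅ : ℝ → ℝ) : Op :=
  (-(hbar ^ 2 / 2) : ℂ) • lap + mulR V₀
    + ((1 : ℂ)/2) • (mulR V₁ ∘ dot sigmaSum (LOp hbar))
    + mulR V₂ ∘ KOp
    + mulR V₃ ∘ (dot xOp sigma1 ∘ dot xOp sigma2)
    + mulR V₄ ∘ (dot sigma1 (pOp hbar) ∘ dot sigma2 (pOp hbar))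
    + ((1 : ℂ)/2) • (mulR V₅ ∘ (dot sigma1 (LOp hbar) ∘ dot sigma2 (LOp hbar)
        + dot sigma2 (LOp hbar) ∘ dot sigma1 (LOp hbar)))


/-- `Y₅ = (1/r)(x,σ₁×σ₂)`. -/
def Y5 : Op := mulR (fun r => 1 / r) ∘ dot xOp (cross sigma1 sigma2)

/-- `Y₆ = (1/r)(x,σ₁)`. -/
def Y6 : Op := mulR (fun r => 1 / r) ∘ dot xOp sigma1

/-- `Y₇ = (1/r)(x,σ₂−σ₁)`. -/
def Y7 : Op := mulR (fun r => 1 / r) ∘ dot xOp (fun k => sigma2 k - sigma1 k)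

/-!
All operators involved act pointwise as multiplication by position-dependent 4×4 matrices, so
their commutators are pointwise matrix commutators. Each `Y` is `(1/r) Σ_k x_k M_k` for constant
spin matrices `M_k`, and `K` is constant, so `[K, Y]` is `(1/r) Σ_k x_k [K, M_k]`; the claims then
reduce to the spin identities `[K, σ₁] = 2i σ₁×σ₂`, `[K, σ₂] = -2i σ₁×σ₂` and
`[K, σ₁×σ₂] = 4i (σ₂ - σ₁)`, verified entrywise. Finally `(x,σ₁)` commutes with `(x,σ₂)`, the
two spins acting on different tensor factors, and with itself, hence with `(x,σ₂-σ₁)`.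
-/

open scoped Matrix Kronecker

local notation "SpinMat" => Matrix (Fin 2 × Fin 2) (Fin 2 × Fin 2) ℂ

def spin1 (k : Fin 3) : SpinMat := pauli k ⊗ₖ 1

def spin2 (k : Fin 3) : SpinMat := 1 ⊗ₖ pauli k

def spinExchange : SpinMat := ∑ k, spin1 k * spin2 k

def spinCross (k : Fin 3) : SpinMat :=
  ∑ l, ∑ m, eps k l m • (spin1 l * spin2 m)

lemma spin1_apply (k : Fin 3) (a b c d : Fin 2) :
    spin1 k (a, b) (c, d) = pauli k a c * (1 : Matrix (Fin 2) (Fin 2) ℂ) b d := rfl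

lemma spin2_apply (k : Fin 3) (a b c d : Fin 2) :
    spin2 k (a, b) (c, d) = (1 : Matrix (Fin 2) (Fin 2) ℂ) a c * pauli k b d := rfl

lemma spin1_mul_spin2 (k l : Fin 3) : spin1 k * spin2 l = pauli k ⊗ₖ pauli l := by
  rw [spin1, spin2, ← Matrix.mul_kronecker_mul, Matrix.mul_one, Matrix.one_mul]

lemma spin2_mul_spin1 (k l : Fin 3) : spin2 l * spin1 k = pauli k ⊗ₖ pauli l := by
  rw [spin1, spin2, ← Matrix.mul_kronecker_mul, Matrix.mul_one, Matrix.one_mul]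

lemma commute_spin1_spin2 (k l : Fin 3) : Commute (spin1 k) (spin2 l) :=
  (spin1_mul_spin2 k l).trans (spin2_mul_spin1 k l).symm

lemma spinExchange_apply (a b c d : Fin 2) :
    spinExchange (a, b) (c, d) = ∑ k, pauli k a c * pauli k b d := by
  simp [spinExchange, spin1_mul_spin2, Matrix.sum_apply]

lemma spinCross_apply (k : Fin 3) (a b c d : Fin 2) :
    spinCross k (a, b) (c, d) = ∑ l, ∑ m, eps k l m * (pauli l a c * pauli m b d) := by
  simp [spinCross, spin1_mul_spin2, Matrix.sum_apply]

lemma commutator_spinExchange_spin1 (k : Fin 3) :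
    spinExchange * spin1 k - spin1 k * spinExchange = (2 * Complex.I) • spinCross k := by
  ext ⟨a, b⟩ ⟨c, d⟩
  simp only [Matrix.sub_apply, Matrix.smul_apply, Matrix.mul_apply, Fintype.sum_prod_type,
    spinExchange_apply, spinCross_apply, spin1_apply]
  fin_cases k <;> fin_cases a <;> fin_cases b <;> fin_cases c <;> fin_cases d <;>
    simp [Fin.sum_univ_three, pauli, eps, Matrix.one_apply] <;> ring_nf <;> simp

set_option maxHeartbeats 1000000 in
lemma commutator_spinExchange_spin2 (k : Fin 3) :
    spinExchange * spin2 k - spin2 k * spinExchange = -(2 * Complex.I) • spinCross k := by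
  ext ⟨a, b⟩ ⟨c, d⟩
  simp only [Matrix.sub_apply, Matrix.smul_apply, Matrix.mul_apply, Fintype.sum_prod_type,
    spinExchange_apply, spinCross_apply, spin2_apply]
  fin_cases k <;> fin_cases a <;> fin_cases b <;> fin_cases c <;> fin_cases d <;>
    simp [Fin.sum_univ_three, pauli, eps, Matrix.one_apply] <;> ring_nf <;> simp

set_option maxHeartbeats 4000000 in
lemma commutator_spinExchange_spinCross (k : Fin 3) :
    spinExchange * spinCross k - spinCross k * spinExchange =
      (4 * Complex.I) • (spin2 k - spin1 k) := by
  ext ⟨a, b⟩ ⟨c, d⟩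
  simp only [Matrix.sub_apply, Matrix.smul_apply, Matrix.mul_apply, Fintype.sum_prod_type,
    spinExchange_apply, spinCross_apply, spin1_apply, spin2_apply]
  fin_cases k <;> fin_cases a <;> fin_cases b <;> fin_cases c <;> fin_cases d <;>
    simp [Fin.sum_univ_three, pauli, eps] <;> ring_nf <;> simp

lemma commutator_spinExchange_spin2_sub_spin1 (k : Fin 3) :
    spinExchange * (spin2 k - spin1 k) - (spin2 k - spin1 k) * spinExchange =
      -(4 * Complex.I) • spinCross k := by
  rw [mul_sub, sub_mul, sub_sub_sub_comm, commutator_spinExchange_spin1,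
    commutator_spinExchange_spin2, ← sub_smul]
  ring_nf

def matOp (M : (Fin 3 → ℝ) → SpinMat) : Op :=
  fun ψ x => M x *ᵥ ψ x

section matOp

variable (A B : (Fin 3 → ℝ) → SpinMat)

lemma matOp_comp : matOp A ∘ matOp B = matOp (A * B) := by
  funext ψ x
  simp [matOp, Matrix.mulVec_mulVec]

lemma smul_matOp (c : ℂ) : c • matOp A = matOp (c • A) := by
  funext ψ x
  simp [matOp, Matrix.smul_mulVec]

lemma sub_matOp : matOp A - matOp B = matOp (A - B) := by
  funext ψ x
  simp [matOp, Matrix.sub_mulVec]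

lemma sum_matOp {ι : Type*} (s : Finset ι) (M : ι → (Fin 3 → ℝ) → SpinMat) :
    ∑ i ∈ s, matOp (M i) = matOp (∑ i ∈ s, M i) := by
  funext ψ x
  simp [matOp, Matrix.sum_mulVec, Finset.sum_apply]

lemma opComm_matOp : opComm (matOp A) (matOp B) = matOp fun x => A x * B x - B x * A x := by
  funext ψ x
  simp [opComm, matOp, Matrix.sub_mulVec, Matrix.mulVec_mulVec]

end matOp

lemma sigma1_eq_matOp (k : Fin 3) : sigma1 k = matOp fun _ => spin1 k := by
  funext ψ x ⟨a, b⟩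
  simp [sigma1, matOp, Matrix.mulVec, dotProduct, Fintype.sum_prod_type, spin1_apply,
    Matrix.one_apply]

lemma sigma2_eq_matOp (k : Fin 3) : sigma2 k = matOp fun _ => spin2 k := by
  funext ψ x ⟨a, b⟩
  simp [sigma2, matOp, Matrix.mulVec, dotProduct, Fintype.sum_prod_type, spin2_apply,
    Matrix.one_apply]

lemma KOp_eq_matOp : KOp = matOp fun _ => spinExchange := by
  simp only [KOp, dot, sigma1_eq_matOp, sigma2_eq_matOp, matOp_comp, sum_matOp]
  rfl

lemma cross_sigma1_sigma2_eq_matOp (k : Fin 3) :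
    cross sigma1 sigma2 k = matOp fun _ => spinCross k := by
  simp only [cross, sigma1_eq_matOp, sigma2_eq_matOp, matOp_comp, smul_matOp, sum_matOp]
  rfl

def radialMat (f : ℝ → ℝ) (M : Fin 3 → SpinMat)
    (x : Fin 3 → ℝ) : SpinMat :=
  (f (rfun x) : ℂ) • ∑ k, (x k : ℂ) • M k

section radialMat

variable (f : ℝ → ℝ) (M N : Fin 3 → SpinMat)

lemma mulR_comp_dot_xOp :
    mulR f ∘ dot xOp (fun k => matOp fun _ => M k) = matOp (radialMat f M) := by
  funext ψ x
  simp [mulR, dot, xOp, matOp, radialMat, Finset.sum_apply, Matrix.sum_mulVec,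
    Matrix.smul_mulVec, Finset.smul_sum]

lemma radialMat_smul (c : ℂ) : radialMat f (fun k => c • M k) = c • radialMat f M := by
  funext x
  simp only [radialMat, Pi.smul_apply, smul_comm _ c, Finset.smul_sum]

lemma radialMat_sub :
    radialMat f (fun k => M k - N k) = radialMat f M - radialMat f N := by
  funext x
  simp only [radialMat, Pi.sub_apply, smul_sub, Finset.sum_sub_distrib]

lemma commutator_radialMat (A : SpinMat) (x : Fin 3 → ℝ) :
    A * radialMat f M x - radialMat f M x * A = radialMat f (fun k => A * M k - M k * A) x := by
  simp only [radialMat, Matrix.mul_smul, Matrix.smul_mul, Finset.mul_sum, Finset.sum_mul,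
    ← smul_sub, ← Finset.sum_sub_distrib]

lemma commute_radialMat (g : ℝ → ℝ) (h : ∀ k l, Commute (M k) (N l)) (x : Fin 3 → ℝ) :
    Commute (radialMat f M x) (radialMat g N x) :=
  ((Commute.sum_left _ _ _ fun k _ => Commute.sum_right _ _ _ fun l _ =>
    ((h k l).smul_left _).smul_right _).smul_left _).smul_right _

end radialMat

lemma Y5_eq_matOp : Y5 = matOp (radialMat (fun r => 1 / r) spinCross) := by
  simp only [Y5, funext cross_sigma1_sigma2_eq_matOp, mulR_comp_dot_xOp]

lemma Y6_eq_matOp : Y6 = matOp (radialMat (fun r => 1 / r) spin1) := by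
  rw [Y6, show sigma1 = _ from funext sigma1_eq_matOp]
  exact mulR_comp_dot_xOp _ _

lemma Y7_eq_matOp : Y7 = matOp (radialMat (fun r => 1 / r) fun k => spin2 k - spin1 k) := by
  simp only [Y7, sigma1_eq_matOp, sigma2_eq_matOp, sub_matOp]
  exact mulR_comp_dot_xOp _ _

theorem statement14_general
    (ψ : WaveFn)
    (x : Fin 3 → ℝ) :
    opComm KOp Y6 ψ x = ((2 * Complex.I) • Y5) ψ x
    ∧ opComm KOp Y5 ψ x = ((4 * Complex.I) • Y7) ψ x
    ∧ opComm KOp Y7 ψ x = ((-(4 * Complex.I)) • Y5) ψ x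
    ∧ opComm Y6 Y7 ψ x = 0 := by
  refine ⟨?_, ?_, ?_, ?_⟩
  all_goals simp only [KOp_eq_matOp, Y5_eq_matOp, Y6_eq_matOp, Y7_eq_matOp, opComm_matOp,
    smul_matOp]
  · simp only [commutator_radialMat, commutator_spinExchange_spin1, radialMat_smul]
  · simp only [commutator_radialMat, commutator_spinExchange_spinCross, radialMat_smul]
  · simp only [commutator_radialMat, commutator_spinExchange_spin2_sub_spin1, radialMat_smul]
  · have hcomm : Commute (radialMat (fun r => 1 / r) spin1 x)
        (radialMat (fun r => 1 / r) (fun k => spin2 k - spin1 k) x) := by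
      rw [radialMat_sub]
      exact (commute_radialMat _ _ _ _ commute_spin1_spin2 x).sub_right (Commute.refl _)
    simp only [matOp, hcomm.eq, sub_self, Matrix.zero_mulVec]

/-- `[K,Y₆] = 2iY₅`, `[K,Y₅] = 4iY₇`, `[K,Y₇] = −4iY₅` and `[Y₆,Y₇] = 0`. -/
theorem statement14
    (ψ : WaveFn) (hψ : ContDiffOn ℝ (⊤ : ℕ∞) ψ {x : Fin 3 → ℝ | x ≠ 0})
    (x : Fin 3 → ℝ) (hx : x ≠ 0) :
    opComm KOp Y6 ψ x = ((2 * Complex.I) • Y5) ψ x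
    ∧ opComm KOp Y5 ψ x = ((4 * Complex.I) • Y7) ψ x
    ∧ opComm KOp Y7 ψ x = ((-(4 * Complex.I)) • Y5) ψ x
    ∧ opComm Y6 Y7 ψ x = 0 :=
  statement14_general ψ x
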